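/- arXiv:1904.04799 — 7 statements merged into one kernel-verified Lean document; each statement's English description precedes it below -/
import Mathlib

section
/- For a permutation σ of {1,…,n+1}, a set I ⊆ {(i,j) : 1 ≤ i < j ≤ n+1} is the set of inversions of some permutation if and only if for all i < j < k: (1) if (i,j) ∈ I and (j,k) ∈ I then (i,k) ∈ I, and (2) if (i,j) ∉ I and (j,k) ∉ I then (i,k) ∉ I. -/
/-- The set of inversions of a permutation: pairs `(i,j)` with `i < j` and `σ i > σ j`. -/
def invSet {n : ℕ} (σ : Equiv.Perm (Fin n)) : Finset (Fin n × Fin n) :=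
  Finset.univ.filter fun p => p.1 < p.2 ∧ σ p.2 < σ p.1

section Aux

variable {n : ℕ} (I : Finset (Fin (n + 1) × Fin (n + 1)))

/-- The strict order induced by an inversion set. -/
def relOf (a b : Fin (n + 1)) : Prop :=
  (a < b ∧ (a, b) ∉ I) ∨ (b < a ∧ (b, a) ∈ I)

variable {I}

lemma relOf_irrefl (a : Fin (n + 1)) : ¬ relOf I a a := by
  rintro (⟨h, -⟩ | ⟨h, -⟩) <;> exact lt_irrefl _ h

lemma relOf_total {a b : Fin (n + 1)} (h : a ≠ b) : relOf I a b ∨ relOf I b a := by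
  rcases lt_or_gt_of_ne h with hlt | hgt
  · by_cases hm : (a, b) ∈ I
    · exact Or.inr (Or.inr ⟨hlt, hm⟩)
    · exact Or.inl (Or.inl ⟨hlt, hm⟩)
  · by_cases hm : (b, a) ∈ I
    · exact Or.inl (Or.inr ⟨hgt, hm⟩)
    · exact Or.inr (Or.inl ⟨hgt, hm⟩)

lemma relOf_trans
    (H : ∀ i j k : Fin (n + 1), i < j → j < k →
        (((i, j) ∈ I → (j, k) ∈ I → (i, k) ∈ I) ∧
         ((i, j) ∉ I → (j, k) ∉ I → (i, k) ∉ I)))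
    {a b c : Fin (n + 1)} (hab : relOf I a b) (hbc : relOf I b c) : relOf I a c := by
  rcases hab with ⟨h1, m1⟩ | ⟨h1, m1⟩ <;> rcases hbc with ⟨h2, m2⟩ | ⟨h2, m2⟩
  · -- a < b, (a,b)∉I ; b < c, (b,c)∉I
    exact Or.inl ⟨h1.trans h2, (H a b c h1 h2).2 m1 m2⟩
  · -- a < b, (a,b)∉I ; c < b, (c,b)∈I
    rcases lt_trichotomy a c with hac | hac | hac
    · refine Or.inl ⟨hac, fun hm => m1 ((H a c b hac h2).1 hm m2)⟩
    · exact absurd m2 (hac ▸ m1)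
    · refine Or.inr ⟨hac, by_contra fun hm => ?_⟩
      exact ((H c a b hac h1).2 hm m1) m2
  · -- b < a, (b,a)∈I ; b < c, (b,c)∉I
    rcases lt_trichotomy a c with hac | hac | hac
    · refine Or.inl ⟨hac, fun hm => m2 ((H b a c h1 hac).1 m1 hm)⟩
    · exact absurd m1 (hac ▸ m2)
    · refine Or.inr ⟨hac, by_contra fun hm => ?_⟩
      exact ((H b c a h2 hac).2 m2 hm) m1
  · -- b < a, (b,a)∈I ; c < b, (c,b)∈I
    exact Or.inr ⟨h2.trans h1, (H c b a h2 h1).1 m2 m1⟩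

instance {n : ℕ} (I : Finset (Fin (n + 1) × Fin (n + 1))) (a b : Fin (n + 1)) :
    Decidable (relOf I a b) := by unfold relOf; infer_instance

/-- rank of an element under `relOf I`. -/
noncomputable def rankOf (I : Finset (Fin (n + 1) × Fin (n + 1))) (a : Fin (n + 1)) : ℕ :=
  (Finset.univ.filter fun b => relOf I b a).card

lemma rankOf_lt (a : Fin (n + 1)) : rankOf I a < n + 1 := by
  have h : (Finset.univ.filter fun b => relOf I b a) ⊆ Finset.univ.erase a := by
    intro b hb
    simp only [Finset.mem_filter] at hb
    refine Finset.mem_erase.mpr ⟨fun hba => relOf_irrefl a (hba ▸ hb.2), Finset.mem_univ _⟩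
  calc rankOf I a ≤ (Finset.univ.erase a).card := Finset.card_le_card h
    _ < Finset.univ.card := Finset.card_erase_lt_of_mem (Finset.mem_univ a)
    _ = n + 1 := by simp

lemma rankOf_strict
    (H : ∀ i j k : Fin (n + 1), i < j → j < k →
        (((i, j) ∈ I → (j, k) ∈ I → (i, k) ∈ I) ∧
         ((i, j) ∉ I → (j, k) ∉ I → (i, k) ∉ I)))
    {a b : Fin (n + 1)} (hab : relOf I a b) : rankOf I a < rankOf I b := by
  unfold rankOf
  apply Finset.card_lt_card
  constructor
  · intro c hc
    simp only [Finset.mem_filter, Finset.mem_univ, true_and] at hc ⊢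
    exact relOf_trans H hc hab
  · intro hsub
    have := hsub (by simp only [Finset.mem_filter, Finset.mem_univ, true_and]; exact hab)
    simp only [Finset.mem_filter, Finset.mem_univ, true_and] at this
    exact relOf_irrefl a this

end Aux

/-- A set `I` of pairs `(i,j)` with `i < j` is the inversion set of some permutation iff
for all `i < j < k`: `(i,j) ∈ I ∧ (j,k) ∈ I → (i,k) ∈ I` and
`(i,j) ∉ I ∧ (j,k) ∉ I → (i,k) ∉ I`. -/
theorem inversion_set_characterization (n : ℕ)
    (I : Finset (Fin (n + 1) × Fin (n + 1)))
    (hI : ∀ p ∈ I, p.1 < p.2) :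
    (∃ σ : Equiv.Perm (Fin (n + 1)), I = invSet σ) ↔
      ∀ i j k : Fin (n + 1), i < j → j < k →
        (((i, j) ∈ I → (j, k) ∈ I → (i, k) ∈ I) ∧
         ((i, j) ∉ I → (j, k) ∉ I → (i, k) ∉ I)) := by
  constructor
  · rintro ⟨σ, rfl⟩ i j k hij hjk
    simp only [invSet, Finset.mem_filter, Finset.mem_univ, true_and]
    constructor
    · rintro ⟨-, h1⟩ ⟨-, h2⟩
      exact ⟨hij.trans hjk, h2.trans h1⟩
    · intro h1 h2 h3
      obtain ⟨-, h3⟩ := h3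
      have e1 : σ i ≤ σ j := le_of_not_gt fun h => h1 ⟨hij, h⟩
      have e2 : σ j ≤ σ k := le_of_not_gt fun h => h2 ⟨hjk, h⟩
      exact absurd h3 (not_lt.mpr (e1.trans e2))
  · intro H
    classical
    have hinj : Function.Injective (fun a : Fin (n + 1) => (⟨rankOf I a, rankOf_lt a⟩ : Fin (n + 1))) := by
      intro a b hab
      by_contra hne
      rcases relOf_total hne with h | h
      · exact absurd (rankOf_strict H h) (by simp_all)
      · exact absurd (rankOf_strict H h) (by
          have : rankOf I a = rankOf I b := by simpa [Fin.mk.injEq] using hab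
          omega)
    have hbij := (Finite.injective_iff_bijective).mp hinj
    refine ⟨Equiv.ofBijective _ hbij, ?_⟩
    ext ⟨a, b⟩
    simp only [invSet, Finset.mem_filter, Finset.mem_univ, true_and, Equiv.ofBijective_apply,
      Fin.mk_lt_mk]
    constructor
    · intro hm
      have hab := hI _ hm
      exact ⟨hab, rankOf_strict H (Or.inr ⟨hab, hm⟩)⟩
    · rintro ⟨hab, hr⟩
      by_contra hm
      exact absurd (rankOf_strict H (Or.inl ⟨hab, hm⟩)) (by omega)
end

section
/- Let σ₀, σ₁ ∈ S_{n+1} with inv(σ₁) = inv(σ₀) + 1 and σ₁ = σ₀·(j₀ j₁) = (i₀ i₁)·σ₀ where i₀ < i₁, j₀ < j₁, σ₀(i₀) = j₀ and σ₀(i₁) = j₁ (a covering relation in the strong Bruhat order). Then for every k ∈ {1,…,n}, mult_k(σ₁) = mult_k(σ₀) + (j₁ − j₀) if i₀ ≤ k < i₁, and mult_k(σ₁) = mult_k(σ₀) otherwise. -/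
/-- The number of inversions of a permutation. -/
def invCount {n : ℕ} (σ : Equiv.Perm (Fin n)) : ℕ := (invSet σ).card

/-- `mult_k(σ) = Σ_{j=1}^{k} (σ(j) - j)` (0-indexed: sum over positions `j < k`). -/
def multk {n : ℕ} (σ : Equiv.Perm (Fin n)) (k : ℕ) : ℤ :=
  ∑ j ∈ Finset.univ.filter (fun j : Fin n => (j : ℕ) < k), ((σ j : ℤ) - (j : ℕ))

/-! Right multiplication by the transposition `(a b)` exchanges the values of `σ` at the
positions `a` and `b`, so in the partial sum `mult_k` the summand at `a` gains `σ b - σ a` and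
the one at `b` gains `σ a - σ b`; only the gains at positions below `k` are counted. -/

lemma cast_mul_swap_apply {n : ℕ} (σ : Equiv.Perm (Fin n)) (a b j : Fin n) :
    ((σ * Equiv.swap a b) j : ℤ) = σ j + ((if j = a then (σ b : ℤ) - σ a else 0) +
      (if j = b then (σ a : ℤ) - σ b else 0)) := by
  rw [Equiv.Perm.mul_apply]
  rcases eq_or_ne j a with rfl | hja
  · rcases eq_or_ne j b with rfl | hjb <;> simp [*]
  · rcases eq_or_ne j b with rfl | hjb
    · simp [hja]
    · simp [Equiv.swap_apply_of_ne_of_ne hja hjb, hja, hjb]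

lemma multk_mul_swap {n : ℕ} (σ : Equiv.Perm (Fin n)) (a b : Fin n) (k : ℕ) :
    multk (σ * Equiv.swap a b) k = multk σ k +
      ((if (a : ℕ) < k then (σ b : ℤ) - σ a else 0) +
        (if (b : ℕ) < k then (σ a : ℤ) - σ b else 0)) := by
  have hsummand (j : Fin n) : ((σ * Equiv.swap a b) j : ℤ) - (j : ℕ) = ((σ j : ℤ) - (j : ℕ)) +
      ((if j = a then (σ b : ℤ) - σ a else 0) + (if j = b then (σ a : ℤ) - σ b else 0)) := by
    rw [cast_mul_swap_apply]; ring
  simp only [multk, hsummand, Finset.sum_add_distrib, Finset.sum_ite_eq', Finset.mem_filter,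
    Finset.mem_univ, true_and]

theorem multk_of_bruhat_cover_general (n : ℕ) (σ₀ σ₁ : Equiv.Perm (Fin (n + 1)))
    (i₀ i₁ j₀ j₁ : Fin (n + 1)) (hi : i₀ < i₁)
    (h0 : σ₀ i₀ = j₀) (h1 : σ₀ i₁ = j₁)
    (hL : σ₁ = σ₀ * Equiv.swap i₀ i₁)
    (k : ℕ) :
    multk σ₁ k =
      multk σ₀ k + (if (i₀ : ℕ) < k ∧ k ≤ (i₁ : ℕ) then (j₁ : ℤ) - (j₀ : ℤ) else 0) := by
  have hi' : (i₀ : ℕ) < i₁ := hi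
  rw [hL, multk_mul_swap, h0, h1]
  split_ifs <;> omega

/-- If `σ₁ = σ₀·(j₀ j₁) = (i₀ i₁)·σ₀` is a Bruhat covering (right-action convention:
`σ₀·(j₀ j₁)` applies `σ₀` first, then swaps the values `j₀, j₁`), with
`i₀ < i₁`, `j₀ < j₁`, `σ₀(i₀) = j₀`, `σ₀(i₁) = j₁` and `inv(σ₁) = inv(σ₀) + 1`, then
`mult_k(σ₁) = mult_k(σ₀) + (j₁ - j₀)·[i₀ ≤ k < i₁]` for `k ∈ {1,…,n}`
(the paper's 1-indexed condition `i₀ ≤ k < i₁` reads `i₀ < k ≤ i₁` in 0-indexing). -/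
theorem multk_of_bruhat_cover (n : ℕ) (σ₀ σ₁ : Equiv.Perm (Fin (n + 1)))
    (i₀ i₁ j₀ j₁ : Fin (n + 1)) (hi : i₀ < i₁) (hj : j₀ < j₁)
    (h0 : σ₀ i₀ = j₀) (h1 : σ₀ i₁ = j₁)
    (hR : σ₁ = Equiv.swap j₀ j₁ * σ₀) (hL : σ₁ = σ₀ * Equiv.swap i₀ i₁)
    (hinv : invCount σ₁ = invCount σ₀ + 1)
    (k : ℕ) (hk1 : 1 ≤ k) (hkn : k ≤ n) :
    multk σ₁ k =
      multk σ₀ k + (if (i₀ : ℕ) < k ∧ k ≤ (i₁ : ℕ) then (j₁ : ℤ) - (j₀ : ℤ) else 0) :=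
  multk_of_bruhat_cover_general n σ₀ σ₁ i₀ i₁ j₀ j₁ hi h0 h1 hL k
end

section
/- For any σ ∈ S_{n+1} and any i ∈ {1,…,n+1}, inv_i(σ) − inv_{σ(i)}(σ^{-1}) = σ(i) − i, where inv_i(σ) = #{j : i < j and σ(i) > σ(j)}. -/
/-!
Let `a` be the number of `j < i` with `σ j < σ i`. The `j` with `σ j < σ i` split by the side of
`i` they lie on, so `inv_i(σ) + a = σ(i)`. Applying this to `σ⁻¹` at `σ(i)`, and noting that the
substitution `j ↦ σ j` turns `a` for `(σ, i)` into `a` for `(σ⁻¹, σ(i))`, gives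
`inv_{σ(i)}(σ⁻¹) + a = i`. Subtract.
-/

/-- `inv_i(σ) = #{j : i < j and σ(i) > σ(j)}`. -/
def invAt {n : ℕ} (σ : Equiv.Perm (Fin n)) (i : Fin n) : ℕ :=
  (Finset.univ.filter fun j : Fin n => i < j ∧ σ j < σ i).card

open Finset Equiv

def leftNoninvAt {n : ℕ} (σ : Perm (Fin n)) (i : Fin n) : ℕ :=
  #{j | j < i ∧ σ j < σ i}

section

variable {n : ℕ}

theorem Fin.card_filter_perm_apply_lt (σ : Perm (Fin n)) (k : Fin n) : #{j | σ j < k} = k := by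
  rw [← Fin.card_Iio k]
  exact card_equiv σ (by simp)

theorem invAt_add_leftNoninvAt (σ : Perm (Fin n)) (i : Fin n) :
    invAt σ i + leftNoninvAt σ i = σ i := by
  rw [← Fin.card_filter_perm_apply_lt σ (σ i), invAt, leftNoninvAt, ← card_union_of_disjoint]
  · congr 1
    ext j
    simp only [mem_union, mem_filter, mem_univ, true_and]
    constructor
    · rintro (⟨-, h⟩ | ⟨-, h⟩) <;> exact h
    · intro h
      have hji : j ≠ i := by rintro rfl; exact lt_irrefl _ h
      exact (lt_or_gt_of_ne hji).symm.imp (⟨·, h⟩) (⟨·, h⟩)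
  · exact disjoint_filter.2 fun j _ h h' => lt_asymm h.1 h'.1

theorem leftNoninvAt_inv_apply (σ : Perm (Fin n)) (i : Fin n) :
    leftNoninvAt σ⁻¹ (σ i) = leftNoninvAt σ i :=
  card_equiv σ.symm (by simp [and_comm])

end

/-- For any `σ ∈ S_{n+1}` and any `i`, `inv_i(σ) - inv_{σ(i)}(σ⁻¹) = σ(i) - i`. -/
theorem invAt_sub_invAt_inv (n : ℕ) (σ : Equiv.Perm (Fin (n + 1))) (i : Fin (n + 1)) :
    (invAt σ i : ℤ) - (invAt σ⁻¹ (σ i) : ℤ) = (σ i : ℤ) - (i : ℕ) := by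
  have h := invAt_add_leftNoninvAt σ i
  have h_inv := invAt_add_leftNoninvAt σ⁻¹ (σ i)
  rw [leftNoninvAt_inv_apply, Perm.coe_inv, symm_apply_apply] at h_inv
  omega
end

section
/- In SL₂(ℝ), with N = ((0,0),(1,0)) (strictly lower nilpotent) and N^T its transpose, for every θ ∈ (−π/2, π/2): exp(θ(N − N^T)) = exp(tan(θ)·N) · exp(log(sec(θ))·[N, N^T]) · exp(−tan(θ)·N^T). -/
open Matrix Real

/-- The strictly lower nilpotent element `N` of `sl₂(ℝ)`. -/
noncomputable def Nmat : Matrix (Fin 2) (Fin 2) ℝ := !![0, 0; 1, 0]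

/-!
Since `(N - Nᵀ)² = -1`, Euler's formula makes `exp (θ (N - Nᵀ))` the rotation by `θ`. While
`cos θ ≠ 0` this rotation has the Gauss (LDU) decomposition
`[[1, 0], [tan θ, 1]] * diag (cos θ, sec θ) * [[1, -tan θ], [0, 1]]`, and these three factors are
the exponentials on the right: `N` and `Nᵀ` square to zero, so `exp (t N) = 1 + t N`, and
`[N, Nᵀ] = diag (-1, 1)`.
-/

open NormedSpace Nat

theorem exp_eq_one_add_of_mul_self_eq_zero {𝔸 : Type*} [Ring 𝔸] [Algebra ℚ 𝔸]
    [TopologicalSpace 𝔸] [IsTopologicalRing 𝔸] {a : 𝔸} (h : a * a = 0) :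
    exp a = 1 + a := by
  have hpow : ∀ n ∉ Finset.range 2, ((n ! : ℚ)⁻¹ • a ^ n) = 0 := fun n hn => by
    obtain ⟨k, rfl⟩ : ∃ k, n = k + 2 := ⟨n - 2, by simp at hn; omega⟩
    rw [pow_add, sq, h, mul_zero, smul_zero]
  rw [exp_eq_tsum_rat]
  beta_reduce
  rw [tsum_eq_sum hpow]
  simp [Finset.sum_range_succ]

theorem exp_smul_eq_cos_add_sin_smul {A : Type*} [NormedRing A] [NormedAlgebra ℝ A] [Algebra ℚ A]
    {J : A} (hJ : J * J = -1) (θ : ℝ) :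
    exp (θ • J) = cos θ • (1 : A) + sin θ • J := by
  let f : ℂ →ₐ[ℝ] A := Complex.liftAux J hJ
  have hf : Continuous f := f.toLinearMap.continuous_of_finiteDimensional
  have hθ : θ • J = f (θ * Complex.I) := by simp [f, Complex.liftAux_apply]
  rw [hθ, ← map_exp f hf, ← Complex.exp_eq_exp_ℂ, Complex.exp_mul_I]
  simp [f, Complex.liftAux_apply, Algebra.algebraMap_eq_smul_one, Complex.cos_ofReal_re,
    Complex.sin_ofReal_re]

theorem rotation_eq_lower_mul_diagonal_mul_upper {c s : ℝ} (hc : c ≠ 0) (h : c ^ 2 + s ^ 2 = 1) :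
    !![c, -s; s, c] = !![1, 0; s / c, 1] * !![c, 0; 0, c⁻¹] * !![1, -(s / c); 0, 1] := by
  ext i j; fin_cases i <;> fin_cases j <;> simp [Matrix.mul_apply]
  all_goals field_simp
  linarith

lemma Nmat_transpose : Nmatᵀ = !![0, 1; 0, 0] := by
  ext i j; fin_cases i <;> fin_cases j <;> rfl

lemma Nmat_sub_Nmat_transpose_mul_self : (Nmat - Nmatᵀ) * (Nmat - Nmatᵀ) = -1 := by
  rw [Nmat_transpose, Nmat, ← Matrix.ext_iff]
  simp [one_fin_two]

lemma exp_smul_Nmat (t : ℝ) : exp (t • Nmat) = !![1, 0; t, 1] := by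
  rw [exp_eq_one_add_of_mul_self_eq_zero (by simp [Nmat, ← Matrix.ext_iff])]
  simp [Nmat, one_fin_two]

lemma exp_smul_Nmat_transpose (t : ℝ) : exp (t • Nmatᵀ) = !![1, t; 0, 1] := by
  rw [Nmat_transpose, exp_eq_one_add_of_mul_self_eq_zero (by simp [← Matrix.ext_iff])]
  simp [one_fin_two]

lemma exp_smul_Nmat_lie_Nmat_transpose (t : ℝ) :
    exp (t • (Nmat * Nmatᵀ - Nmatᵀ * Nmat)) = !![Real.exp (-t), 0; 0, Real.exp t] := by
  have hdiag : t • (Nmat * Nmatᵀ - Nmatᵀ * Nmat) = diagonal ![-t, t] := by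
    rw [Nmat_transpose, Nmat, ← Matrix.ext_iff]
    simp [diagonal_fin_two]
  rw [hdiag, exp_diagonal]
  ext i j; fin_cases i <;> fin_cases j <;> simp [Real.exp_eq_exp_ℝ]

lemma exp_smul_Nmat_sub_Nmat_transpose (θ : ℝ) :
    exp (θ • (Nmat - Nmatᵀ)) = !![cos θ, -sin θ; sin θ, cos θ] := by
  -- `exp` only sees the topology, so any algebra norm on matrices will do.
  let := Matrix.linftyOpNormedRing (n := Fin 2) (α := ℝ)
  let := Matrix.linftyOpNormedAlgebra (n := Fin 2) (R := ℝ) (α := ℝ)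
  refine (exp_smul_eq_cos_add_sin_smul Nmat_sub_Nmat_transpose_mul_self θ).trans ?_
  rw [Nmat_transpose, Nmat, ← Matrix.ext_iff]
  simp [one_fin_two]

/-- For `θ ∈ (-π/2, π/2)`:
`exp(θ(N - N^T)) = exp(tan θ · N) · exp(log(sec θ) · [N, N^T]) · exp(-tan θ · N^T)`. -/
theorem exp_theta_N_sub_NT (θ : ℝ) (hθ : θ ∈ Set.Ioo (-(π / 2)) (π / 2)) :
    NormedSpace.exp (θ • (Nmat - Nmatᵀ)) =
      NormedSpace.exp (Real.tan θ • Nmat) *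
        NormedSpace.exp (Real.log ((Real.cos θ)⁻¹) • (Nmat * Nmatᵀ - Nmatᵀ * Nmat)) *
        NormedSpace.exp ((-Real.tan θ) • Nmatᵀ) := by
  have hcos : 0 < cos θ := cos_pos_of_mem_Ioo hθ
  rw [exp_smul_Nmat_sub_Nmat_transpose, exp_smul_Nmat, exp_smul_Nmat_lie_Nmat_transpose,
    exp_smul_Nmat_transpose, Real.exp_log (inv_pos.2 hcos), Real.exp_neg,
    Real.exp_log (inv_pos.2 hcos), inv_inv, tan_eq_sin_div_cos]
  exact rotation_eq_lower_mul_diagonal_mul_upper hcos.ne' (by linarith [sin_sq_add_cos_sq θ])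
end

section
/- A matrix L in the group of (n+1)×(n+1) lower unitriangular real matrices is totally positive (all minors det(L_{i₀,i₁}) with row set i₀ ≥ i₁ componentwise are positive) implies: if L₀ is totally positive and L₁ lies in the closure of the set of totally positive lower unitriangular matrices (all such minors nonnegative), then both L₀L₁ and L₁L₀ are totally positive. Moreover, the closure of the totally positive matrices is closed under multiplication. -/
/-!
By the Cauchy–Binet formula every minor of a product is a sum of products of minors,
`det (L₀L₁)_{r,c} = ∑_g det (L₀)_{r,g} · det (L₁)_{g,c}` over increasing column sets `g`.
For lower triangular factors the minors with `g ≱ c` or `r ≱ g` vanish and all the others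
are nonnegative under the hypotheses, so every term is nonnegative. If `L₀` is totally
positive, the term `g = c` of `L₀L₁` (resp. `g = r` of `L₁L₀`) is a positive minor of `L₀`
times a principal minor of `L₁`, which equals `1`.
-/

open Matrix

/-- A lower unitriangular matrix. -/
def LowerUni {n : ℕ} (L : Matrix (Fin n) (Fin n) ℝ) : Prop :=
  (∀ i, L i i = 1) ∧ ∀ i j : Fin n, i < j → L i j = 0

/-- `L` is totally positive (as a lower unitriangular matrix): every minor
`det(L_{i₀,i₁})` with row set `i₀ ≥ i₁` componentwise (both written in increasing
order, i.e. given by strictly monotone index maps) is positive. -/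
def TotPos {n : ℕ} (L : Matrix (Fin n) (Fin n) ℝ) : Prop :=
  ∀ (k : ℕ) (r c : Fin k → Fin n), StrictMono r → StrictMono c →
    (∀ m, c m ≤ r m) → 0 < (L.submatrix r c).det

/-- `L` lies in the closure of the totally positive lower unitriangular matrices:
every such minor is nonnegative. -/
def TotNonneg {n : ℕ} (L : Matrix (Fin n) (Fin n) ℝ) : Prop :=
  ∀ (k : ℕ) (r c : Fin k → Fin n), StrictMono r → StrictMono c →
    (∀ m, c m ≤ r m) → 0 ≤ (L.submatrix r c).det

open Finset Equiv

open scoped Classical in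
theorem Finset.sum_injective_eq_sum_strictMono_sum_perm {α M : Type*} [Fintype α]
    [LinearOrder α] [AddCommMonoid M] {k : ℕ} (f : (Fin k → α) → M) :
    ∑ p : Fin k → α with Function.Injective p, f p =
      ∑ g : Fin k → α with StrictMono g, ∑ σ : Perm (Fin k), f (g ∘ σ) := by
  rw [← sum_product']
  refine sum_nbij' (fun p => (p ∘ Tuple.sort p, (Tuple.sort p)⁻¹)) (fun x => x.1 ∘ x.2)
    ?_ ?_ ?_ ?_ ?_
  · intro p hp
    simp only [mem_filter_univ, mem_product, mem_univ, and_true] at hp ⊢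
    exact (Tuple.monotone_sort p).strictMono_of_injective (hp.comp (Tuple.sort p).injective)
  · rintro ⟨g, σ⟩ h
    simp only [mem_product, mem_filter_univ, mem_univ, and_true] at h ⊢
    exact h.injective.comp σ.injective
  · intro p _
    ext i
    simp
  · rintro ⟨g, σ⟩ h
    simp only [mem_product, mem_filter_univ, mem_univ, and_true] at h
    have hsort : σ⁻¹ = Tuple.sort (g ∘ σ) := Tuple.eq_sort_iff.2
      ⟨by simpa [Function.comp_assoc] using h.monotone,
       fun i j hij heq => absurd (h.injective (by simpa using heq)) hij.ne⟩
    simp [← hsort, Function.comp_assoc]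
  · intro p _
    simp [Function.comp_assoc]

theorem Equiv.Perm.exists_le_apply_le {k : ℕ} (σ : Perm (Fin k)) (m : Fin k) :
    ∃ i, m ≤ i ∧ σ i ≤ m := by
  by_contra! h
  have := card_le_card_of_injOn σ (s := Ici m) (t := Ioi m)
    (fun i hi => mem_Ioi.2 (h i (mem_Ici.1 hi))) σ.injective.injOn
  simp only [Fin.card_Ici, Fin.card_Ioi] at this
  omega

namespace Matrix

variable {R α : Type*} [CommRing R] {k : ℕ}

section CauchyBinet

variable [Fintype α]

theorem det_mul_eq_sum_det_submatrix_mul_prod (A : Matrix (Fin k) α R) (B : Matrix α (Fin k) R) :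
    (A * B).det = ∑ p : Fin k → α, (A.submatrix id p).det * ∏ i, B (p i) i := by
  simp only [det_apply', mul_apply, prod_univ_sum, mul_sum, Fintype.piFinset_univ, sum_mul,
    prod_mul_distrib, submatrix_apply, id, mul_assoc]
  exact sum_comm

open scoped Classical in
/-- The Cauchy–Binet formula. -/
theorem det_mul_eq_sum_strictMono [LinearOrder α] (A : Matrix (Fin k) α R)
    (B : Matrix α (Fin k) R) :
    (A * B).det = ∑ g : Fin k → α with StrictMono g,
      (A.submatrix id g).det * (B.submatrix g id).det := by
  have h_noninj : ∀ p : Fin k → α, ¬ Function.Injective p → (A.submatrix id p).det = 0 := by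
    intro p hp
    obtain ⟨i, j, hij, hne⟩ := Function.not_injective_iff.1 hp
    exact det_zero_of_column_eq hne fun _ => by simp [hij]
  rw [det_mul_eq_sum_det_submatrix_mul_prod, ← sum_filter_of_ne fun p _ h => by_contra fun hp =>
    h (by rw [h_noninj p hp, zero_mul]), Finset.sum_injective_eq_sum_strictMono_sum_perm]
  refine sum_congr rfl fun g _ => ?_
  rw [det_apply' (B.submatrix g id), mul_sum]
  refine sum_congr rfl fun σ _ => ?_
  rw [show A.submatrix id (g ∘ σ) = (A.submatrix id g).submatrix id σ from rfl, det_permute']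
  simp only [submatrix_apply, id, Function.comp_apply]
  ring

theorem det_submatrix_mul_eq_sum [LinearOrder α] {β γ : Type*} (M : Matrix β α R)
    (N : Matrix α γ R) (r : Fin k → β) (c : Fin k → γ) :
    ((M * N).submatrix r c).det = ∑ g : Fin k → α with StrictMono g,
      (M.submatrix r g).det * (N.submatrix g c).det := by
  classical
  rw [submatrix_mul _ _ r id c Function.bijective_id, det_mul_eq_sum_strictMono]
  rfl

end CauchyBinet

theorem det_eq_zero_of_forall_le_le (M : Matrix (Fin k) (Fin k) R) (m : Fin k)
    (hM : ∀ i j, i ≤ m → m ≤ j → M i j = 0) : M.det = 0 := by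
  rw [det_apply']
  refine sum_eq_zero fun σ _ => ?_
  obtain ⟨i, hmi, hσi⟩ := σ.exists_le_apply_le m
  exact mul_eq_zero_of_right _ (prod_eq_zero (mem_univ i) (hM _ _ hσi hmi))

variable [LinearOrder α] {L : Matrix α α R}

theorem IsLowerTriangular.det_submatrix_eq_zero (hL : L.IsLowerTriangular) {r c : Fin k → α}
    (hr : Monotone r) (hc : Monotone c) {m : Fin k} (hm : r m < c m) :
    (L.submatrix r c).det = 0 :=
  det_eq_zero_of_forall_le_le _ m fun _ _ him hmj => hL ((hr him).trans_lt (hm.trans_le (hc hmj)))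

theorem IsLowerTriangular.det_submatrix_self (hL : L.IsLowerTriangular) {c : Fin k → α}
    (hc : StrictMono c) : (L.submatrix c c).det = ∏ i, L (c i) (c i) :=
  det_of_isLowerTriangular _ fun _ _ hij => hL (hc hij)

end Matrix

section TotalPositivity

variable {N k : ℕ} {L L' : Matrix (Fin N) (Fin N) ℝ}

theorem LowerUni.isLowerTriangular (h : LowerUni L) : L.IsLowerTriangular :=
  fun i j hij => h.2 i j hij

theorem LowerUni.det_submatrix_self (h : LowerUni L) {c : Fin k → Fin N} (hc : StrictMono c) :
    (L.submatrix c c).det = 1 := by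
  simp [h.isLowerTriangular.det_submatrix_self hc, h.1]

theorem TotPos.totNonneg (h : TotPos L) : TotNonneg L :=
  fun k r c hr hc hcr => (h k r c hr hc hcr).le

theorem TotNonneg.det_submatrix_nonneg (h : TotNonneg L) (hL : L.IsLowerTriangular)
    {r c : Fin k → Fin N} (hr : StrictMono r) (hc : StrictMono c) :
    0 ≤ (L.submatrix r c).det := by
  by_cases hcr : ∀ m, c m ≤ r m
  · exact h k r c hr hc hcr
  · obtain ⟨m, hm⟩ := not_forall.1 hcr
    exact (hL.det_submatrix_eq_zero hr.monotone hc.monotone (not_le.1 hm)).ge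

theorem TotNonneg.det_submatrix_mul_nonneg (h : TotNonneg L) (hL : L.IsLowerTriangular)
    (h' : TotNonneg L') (hL' : L'.IsLowerTriangular) {r c : Fin k → Fin N}
    (hr : StrictMono r) (hc : StrictMono c) : 0 ≤ ((L * L').submatrix r c).det := by
  rw [det_submatrix_mul_eq_sum]
  exact sum_nonneg fun g hg => mul_nonneg (h.det_submatrix_nonneg hL hr (mem_filter.1 hg).2)
    (h'.det_submatrix_nonneg hL' (mem_filter.1 hg).2 hc)

theorem TotNonneg.det_submatrix_mul_pos (h : TotNonneg L) (hL : L.IsLowerTriangular)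
    (h' : TotNonneg L') (hL' : L'.IsLowerTriangular) {r c g : Fin k → Fin N}
    (hr : StrictMono r) (hc : StrictMono c) (hg : StrictMono g)
    (hrg : 0 < (L.submatrix r g).det) (hgc : 0 < (L'.submatrix g c).det) :
    0 < ((L * L').submatrix r c).det := by
  rw [det_submatrix_mul_eq_sum]
  exact sum_pos' (fun g hg => mul_nonneg (h.det_submatrix_nonneg hL hr (mem_filter.1 hg).2)
    (h'.det_submatrix_nonneg hL' (mem_filter.1 hg).2 hc))
    ⟨g, mem_filter.2 ⟨mem_univ g, hg⟩, mul_pos hrg hgc⟩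

end TotalPositivity

/-- If `L₀` is totally positive and `L₁` lies in the closure of the totally positive
lower unitriangular matrices, then `L₀L₁` and `L₁L₀` are totally positive; moreover the
closure is closed under multiplication. -/
theorem totPos_mul (n : ℕ) (L₀ L₁ : Matrix (Fin (n + 1)) (Fin (n + 1)) ℝ)
    (h₀ : LowerUni L₀) (h₁ : LowerUni L₁) :
    (TotPos L₀ → TotNonneg L₁ → TotPos (L₀ * L₁) ∧ TotPos (L₁ * L₀)) ∧
    (TotNonneg L₀ → TotNonneg L₁ → TotNonneg (L₀ * L₁)) := by
  have hT₀ := h₀.isLowerTriangular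
  have hT₁ := h₁.isLowerTriangular
  refine ⟨fun hp₀ hn₁ => ⟨fun k r c hr hc hcr => ?_, fun k r c hr hc hcr => ?_⟩,
    fun hn₀ hn₁ k r c hr hc _ => hn₀.det_submatrix_mul_nonneg hT₀ hn₁ hT₁ hr hc⟩
  · exact hp₀.totNonneg.det_submatrix_mul_pos hT₀ hn₁ hT₁ hr hc hc (hp₀ k r c hr hc hcr)
      ((h₁.det_submatrix_self hc).symm ▸ one_pos)
  · exact hn₁.det_submatrix_mul_pos hT₁ hp₀.totNonneg hT₀ hr hc hr
      ((h₁.det_submatrix_self hr).symm ▸ one_pos) (hp₀ k r c hr hc hcr)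
end

section
/- For σ ∈ S_{n+1}, let P_σ be the permutation matrix with e_k^T P_σ = e_{σ(k)}^T, and define the subgroup Lo_σ = Lo¹_{n+1} ∩ (P_σ Up¹_{n+1} P_σ^{-1}) of the lower unitriangular group. If ρ = ση where η is the longest element, then every L ∈ Lo¹_{n+1} can be written uniquely as L = L₁ L₂ with L₁ ∈ Lo_σ and L₂ ∈ Lo_ρ. -/
open Matrix

/-- An upper unitriangular matrix. -/
def UpperUni {n : ℕ} (U : Matrix (Fin n) (Fin n) ℝ) : Prop :=
  (∀ i, U i i = 1) ∧ ∀ i j : Fin n, j < i → U i j = 0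

/-- `Lo_σ = Lo¹_{n+1} ∩ (P_σ Up¹_{n+1} P_σ⁻¹)`: lower unitriangular `L` such that
`P_σ⁻¹ L P_σ` (whose `(i,j)` entry is `L (σ⁻¹ i) (σ⁻¹ j)`, with `P_σ` defined by
`e_k^T P_σ = e_{σ(k)}^T`) is upper unitriangular. -/
def LoGrp {n : ℕ} (σ : Equiv.Perm (Fin n)) (L : Matrix (Fin n) (Fin n) ℝ) : Prop :=
  LowerUni L ∧ UpperUni (Matrix.of fun i j : Fin n => L (σ⁻¹ i) (σ⁻¹ j))

/-- The longest element `η`, `η(j) = n+2-j` (0-indexed: `j ↦ n - j`). -/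
def eta (n : ℕ) : Equiv.Perm (Fin (n + 1)) := Fin.revPerm

/-!
Write the factors as `1 + X` and `1 + Y`, with `X` supported on the positions `(i, j)`, `j < i`,
inverted by `σ` and `Y` on those not inverted by `σ` (which are exactly the ones inverted by
`ση`). These two patterns partition the strictly lower triangle, and
`(1 + X)(1 + Y) = 1 + X + Y + XY` where the `(i, j)` entry of `XY` only involves entries
of `X` and `Y` strictly closer to the diagonal. So, subdiagonal by subdiagonal, the entries of
`L - 1` determine those of `X + Y`, hence those of `X` and `Y` separately: this gives both
existence and uniqueness by induction on the distance from the diagonal.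
-/

namespace Matrix

variable {R : Type*} [Ring R] {m : ℕ}

def belowSubdiag (k : ℕ) : AddSubgroup (Matrix (Fin m) (Fin m) R) where
  carrier := {M | ∀ i j : Fin m, (i : ℕ) < j + k → M i j = 0}
  zero_mem' _ _ _ := rfl
  add_mem' hM hN i j h := by simp [hM i j h, hN i j h]
  neg_mem' hM i j h := by simp [hM i j h]

def supportedOn (p : Fin m → Fin m → Prop) : AddSubgroup (Matrix (Fin m) (Fin m) R) where
  carrier := {M | ∀ i j, ¬ p i j → M i j = 0}
  zero_mem' _ _ _ := rfl
  add_mem' hM hN i j h := by simp [hM i j h, hN i j h]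
  neg_mem' hM i j h := by simp [hM i j h]

theorem belowSubdiag_antitone : Antitone (belowSubdiag (R := R) (m := m)) :=
  fun _ _ hab _ hM i j h => hM i j (by omega)

theorem mul_mem_belowSubdiag {a b : ℕ} {M N : Matrix (Fin m) (Fin m) R}
    (hM : M ∈ belowSubdiag a) (hN : N ∈ belowSubdiag b) : M * N ∈ belowSubdiag (a + b) := by
  intro i j h
  rw [mul_apply]
  refine Finset.sum_eq_zero fun k _ => ?_
  rcases lt_or_ge (i : ℕ) (k + a) with hik | hik
  · simp [hM i k hik]
  · simp [hN k j (by omega)]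

theorem eq_zero_of_mem_belowSubdiag {k : ℕ} (hk : m ≤ k) {M : Matrix (Fin m) (Fin m) R}
    (hM : M ∈ belowSubdiag k) : M = 0 := by
  ext i j
  exact hM i j (by omega)

section Patterns

variable {p q : Fin m → Fin m → Prop}

theorem supportedOn_le_belowSubdiag_one (hp : ∀ i j, p i j → j < i) :
    supportedOn p ≤ belowSubdiag (R := R) 1 :=
  fun _ hM i j h => hM i j fun hij => by have := Fin.lt_def.mp (hp i j hij); omega

theorem exists_add_mem_supportedOn_of_mem_belowSubdiag (hpq : ∀ i j, j < i → p i j ∨ q i j)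
    {k : ℕ} {D : Matrix (Fin m) (Fin m) R} (hD : D ∈ belowSubdiag (k + 1)) :
    ∃ C₁ C₂ : Matrix (Fin m) (Fin m) R, C₁ ∈ supportedOn p ∧ C₂ ∈ supportedOn q ∧
      C₁ ∈ belowSubdiag (k + 1) ∧ C₂ ∈ belowSubdiag (k + 1) ∧ D = C₁ + C₂ := by
  classical
  set C₁ : Matrix (Fin m) (Fin m) R := of fun i j => if p i j then D i j else 0
  have hC₁ : C₁ ∈ belowSubdiag (k + 1) := fun i j h => by simp [C₁, hD i j h]
  refine ⟨C₁, D - C₁, fun i j h => by simp [C₁, h], fun i j h => ?_, hC₁, sub_mem hD hC₁,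
    (add_sub_cancel C₁ D).symm⟩
  by_cases hij : p i j
  · simp [C₁, hij]
  · have hle : (i : ℕ) < j + (k + 1) := by
      by_contra! hji
      exact (hpq i j (Fin.lt_def.mpr (by omega))).elim hij h
    simp [C₁, hij, hD i j hle]

theorem mem_belowSubdiag_of_add_mem (hpq : ∀ i j, p i j → ¬ q i j) {k : ℕ}
    {X Y : Matrix (Fin m) (Fin m) R} (hX : X ∈ supportedOn p) (hY : Y ∈ supportedOn q)
    (hXY : X + Y ∈ belowSubdiag k) : X ∈ belowSubdiag k ∧ Y ∈ belowSubdiag k := by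
  have hXk : X ∈ belowSubdiag k := fun i j h => by
    by_cases hij : p i j
    · simpa [hY i j (hpq i j hij)] using hXY i j h
    · exact hX i j hij
  exact ⟨hXk, by simpa using sub_mem hXY hXk⟩

theorem exists_eq_mul_of_sub_one_mem_supportedOn (hp : ∀ i j, p i j → j < i)
    (hq : ∀ i j, q i j → j < i) (hpq : ∀ i j, j < i → p i j ∨ q i j)
    {L : Matrix (Fin m) (Fin m) R} (hL : L - 1 ∈ belowSubdiag 1) :
    ∃ A B : Matrix (Fin m) (Fin m) R,
      A - 1 ∈ supportedOn p ∧ B - 1 ∈ supportedOn q ∧ L = A * B := by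
  have approx : ∀ k, ∃ A B : Matrix (Fin m) (Fin m) R, A - 1 ∈ supportedOn p ∧
      B - 1 ∈ supportedOn q ∧ L - A * B ∈ belowSubdiag (k + 1) := by
    intro k
    induction k with
    | zero => exact ⟨1, 1, by simp, by simp, by simpa using hL⟩
    | succ k ih =>
      obtain ⟨A, B, hA, hB, hAB⟩ := ih
      obtain ⟨C₁, C₂, hC₁, hC₂, hC₁k, hC₂k, hC⟩ :=
        exists_add_mem_supportedOn_of_mem_belowSubdiag hpq hAB
      refine ⟨A + C₁, B + C₂, by simpa [add_sub_right_comm] using add_mem hA hC₁,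
        by simpa [add_sub_right_comm] using add_mem hB hC₂, ?_⟩
      have hA₁ := supportedOn_le_belowSubdiag_one hp hA
      have hB₁ := supportedOn_le_belowSubdiag_one hq hB
      have : L - (A + C₁) * (B + C₂) = -(C₁ * (B - 1) + (A - 1) * C₂ + C₁ * C₂) := by
        rw [sub_eq_iff_eq_add.mp hC]
        noncomm_ring
      rw [this]
      refine neg_mem (add_mem (add_mem (mul_mem_belowSubdiag hC₁k hB₁) ?_) ?_)
      · exact belowSubdiag_antitone (by omega) (mul_mem_belowSubdiag hA₁ hC₂k)
      · exact belowSubdiag_antitone (by omega) (mul_mem_belowSubdiag hC₁k hC₂k)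
  obtain ⟨A, B, hA, hB, hAB⟩ := approx m
  exact ⟨A, B, hA, hB, (sub_eq_zero.mp (eq_zero_of_mem_belowSubdiag (by omega) hAB))⟩

theorem eq_and_eq_of_mul_eq_mul (hp : ∀ i j, p i j → j < i)
    (hq : ∀ i j, q i j → j < i) (hpq : ∀ i j, p i j → ¬ q i j)
    {A B A' B' : Matrix (Fin m) (Fin m) R} (hA : A - 1 ∈ supportedOn p)
    (hB : B - 1 ∈ supportedOn q) (hA' : A' - 1 ∈ supportedOn p) (hB' : B' - 1 ∈ supportedOn q)
    (h : A * B = A' * B') : A = A' ∧ B = B' := by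
  have hX : A - A' ∈ supportedOn p := by simpa using sub_mem hA hA'
  have hY : B - B' ∈ supportedOn q := by simpa using sub_mem hB hB'
  have agree : ∀ k, A - A' ∈ belowSubdiag (k + 1) ∧ B - B' ∈ belowSubdiag (k + 1) := by
    intro k
    induction k with
    | zero => exact ⟨supportedOn_le_belowSubdiag_one hp hX, supportedOn_le_belowSubdiag_one hq hY⟩
    | succ k ih =>
      refine mem_belowSubdiag_of_add_mem hpq hX hY ?_
      have : A - A' + (B - B') = -((A - 1) * (B - B') + (A - A') * (B' - 1)) := by
        have key : A - A' + (B - B') =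
            -((A - 1) * (B - B') + (A - A') * (B' - 1)) + (A * B - A' * B') := by
          noncomm_ring
        rwa [h, sub_self, add_zero] at key
      rw [this]
      refine neg_mem (add_mem ?_ ?_)
      · exact belowSubdiag_antitone (by omega)
          (mul_mem_belowSubdiag (supportedOn_le_belowSubdiag_one hp hA) ih.2)
      · exact mul_mem_belowSubdiag ih.1 (supportedOn_le_belowSubdiag_one hq hB')
  obtain ⟨hAA', hBB'⟩ := agree m
  exact ⟨sub_eq_zero.mp (eq_zero_of_mem_belowSubdiag (by omega) hAA'),
    sub_eq_zero.mp (eq_zero_of_mem_belowSubdiag (by omega) hBB')⟩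

end Patterns

end Matrix

open Matrix

theorem LowerUni.sub_one_mem_belowSubdiag {m : ℕ} {L : Matrix (Fin m) (Fin m) ℝ}
    (hL : LowerUni L) : L - 1 ∈ belowSubdiag 1 := by
  intro i j h
  rcases (Nat.lt_succ_iff.mp h).lt_or_eq with hij | hij
  · have hij : i < j := hij
    simp [hL.2 i j hij, one_apply_ne hij.ne]
  · obtain rfl := Fin.ext hij
    simp [hL.1]

theorem loGrp_iff {m : ℕ} (τ : Equiv.Perm (Fin m)) (A : Matrix (Fin m) (Fin m) ℝ) :
    LoGrp τ A ↔ A - 1 ∈ supportedOn (fun i j => j < i ∧ τ i < τ j) := by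
  constructor
  · rintro ⟨⟨hdiag, hupper⟩, -, hτ⟩ i j hij
    rcases lt_trichotomy i j with h | rfl | h
    · simp [hupper i j h, one_apply_ne h.ne]
    · simp [hdiag]
    · have : τ j < τ i := (not_lt.mp fun h' => hij ⟨h, h'⟩).lt_of_ne (τ.injective.ne h.ne)
      simpa [one_apply_ne h.ne'] using hτ (τ i) (τ j) this
  · intro hA
    have hdiag : ∀ i, A i i = 1 := fun i => by simpa [sub_eq_zero] using hA i i (by simp)
    have hoff : ∀ i j, i ≠ j → ¬(j < i ∧ τ i < τ j) → A i j = 0 := fun i j hij h => by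
      simpa [one_apply_ne hij] using hA i j h
    refine ⟨⟨hdiag, fun i j h => hoff i j h.ne fun h' => (h'.1.trans h).false⟩,
      fun i => hdiag _, fun i j h => hoff _ _ (by simpa using h.ne') (by simp [h.not_gt])⟩

theorem eta_mul_apply_lt_iff {n : ℕ} (σ : Equiv.Perm (Fin (n + 1))) (i j : Fin (n + 1)) :
    (eta n * σ) i < (eta n * σ) j ↔ σ j < σ i := by
  simp [eta, Fin.rev_lt_rev]

/-- If `ρ = ση` (right-action composition: first `σ`, then `η`), then every lower
unitriangular `L` factors uniquely as `L = L₁ L₂` with `L₁ ∈ Lo_σ` and `L₂ ∈ Lo_ρ`. -/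
theorem unique_factorization_LoGrp (n : ℕ) (σ ρ : Equiv.Perm (Fin (n + 1)))
    (h : ρ = eta n * σ) (L : Matrix (Fin (n + 1)) (Fin (n + 1)) ℝ) (hL : LowerUni L) :
    ∃! p : Matrix (Fin (n + 1)) (Fin (n + 1)) ℝ × Matrix (Fin (n + 1)) (Fin (n + 1)) ℝ,
      LoGrp σ p.1 ∧ LoGrp ρ p.2 ∧ L = p.1 * p.2 := by
  subst h
  simp only [loGrp_iff, eta_mul_apply_lt_iff]
  have hp : ∀ i j : Fin (n + 1), j < i ∧ σ i < σ j → j < i := fun _ _ => And.left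
  have hq : ∀ i j : Fin (n + 1), j < i ∧ σ j < σ i → j < i := fun _ _ => And.left
  obtain ⟨A, B, hA, hB, rfl⟩ := exists_eq_mul_of_sub_one_mem_supportedOn hp hq
    (fun i j hij => (lt_or_gt_of_ne (σ.injective.ne hij.ne')).imp (⟨hij, ·⟩) (⟨hij, ·⟩))
    hL.sub_one_mem_belowSubdiag
  refine ⟨(A, B), ⟨hA, hB, rfl⟩, fun ⟨A', B'⟩ ⟨hA', hB', hAB⟩ => ?_⟩
  obtain ⟨rfl, rfl⟩ := eq_and_eq_of_mul_eq_mul hp hq (fun i j h h' => h.2.asymm h'.2)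
    hA' hB' hA hB hAB.symm
  rfl
end

section
/- Let Γ : [t₀, t₁] → Lo¹_{n+1} be an absolutely continuous curve with Γ(t)^{-1}Γ'(t) = Σ_i β_i(t) l_i where each β_i is a positive integrable function (a convex curve). Then for 1 ≤ i ≤ i+l ≤ n+1, the entry (Γ(t₀)^{-1}Γ(t))_{i+l, i} equals the iterated integral ∫_{t₀ ≤ τ₁ ≤ ⋯ ≤ τ_l ≤ t} β_{i+l−1}(τ₁)⋯β_i(τ_l) dτ₁⋯dτ_l. In particular each such entry is strictly positive for t > t₀. -/
open Matrix MeasureTheory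

/-- The elementary nilpotent matrix `l_j = e_{j+1} e_j^T`. -/
def lmat (n : ℕ) (j : Fin n) : Matrix (Fin (n + 1)) (Fin (n + 1)) ℝ :=
  Matrix.single j.succ j.castSucc 1

/-!
`M(t) = Γ(t₀)⁻¹ Γ(t)` solves `M' = M · Σ β_j l_j` with `M(t₀) = 1`. Right multiplication by
`l_j` moves column `j + 1` to column `j` and kills the others, so the fundamental theorem of
calculus gives, column by column, `M(t)_{a,j} = δ_{aj} + ∫_{t₀}^t β_j(s) M(s)_{a,j+1} ds`.
Starting from the unit diagonal and going down one subdiagonal at a time, this recursion is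
exactly the one obtained for the iterated integral over `t₀ ≤ τ₁ ≤ ⋯ ≤ τ_l ≤ t` by integrating
out the largest variable `τ_l` last (Fubini); with `β_j > 0` the same recursion gives positivity.
-/

open Set

def orderedSimplex (l : ℕ) (a b : ℝ) : Set (Fin l → ℝ) :=
  {τ | (∀ m, τ m ∈ Icc a b) ∧ Monotone τ}

theorem isClosed_orderedSimplex (l : ℕ) (a b : ℝ) : IsClosed (orderedSimplex l a b) := by
  have : IsClosed {τ : Fin l → ℝ | ∀ m, τ m ∈ Icc a b} := by
    rw [ofPred_forall]
    exact isClosed_iInter fun m => isClosed_Icc.preimage (continuous_apply m)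
  exact this.inter isClosed_monotone

theorem measurableSet_orderedSimplex (l : ℕ) (a b : ℝ) :
    MeasurableSet (orderedSimplex l a b) :=
  (isClosed_orderedSimplex l a b).measurableSet

theorem orderedSimplex_zero (a b : ℝ) : orderedSimplex 0 a b = univ :=
  eq_univ_of_forall fun τ => ⟨finZeroElim, Subsingleton.monotone τ⟩

theorem Fin.monotone_snoc_iff {α : Type*} [Preorder α] {l : ℕ} {τ : Fin l → α} {s : α} :
    Monotone (Fin.snoc τ s : Fin (l + 1) → α) ↔ Monotone τ ∧ ∀ m, τ m ≤ s := by
  refine ⟨fun h => ⟨fun p q hpq => ?_, fun m => ?_⟩, fun ⟨hτ, hs⟩ p q hpq => ?_⟩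
  · simpa using h (Fin.castSucc_le_castSucc_iff.2 hpq)
  · simpa using h (Fin.le_last m.castSucc)
  · induction q using Fin.lastCases with
    | last => induction p using Fin.lastCases <;> simp [hs]
    | cast q =>
      induction p using Fin.lastCases with
      | last => exact absurd hpq (Fin.castSucc_lt_last q).not_ge
      | cast p => simpa using hτ (Fin.castSucc_le_castSucc_iff.1 hpq)

theorem snoc_mem_orderedSimplex_iff {l : ℕ} {a b s : ℝ} {τ : Fin l → ℝ} :
    Fin.snoc τ s ∈ orderedSimplex (l + 1) a b ↔ s ∈ Icc a b ∧ τ ∈ orderedSimplex l a s := by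
  simp only [orderedSimplex, mem_ofPred_eq, Fin.forall_fin_succ', Fin.snoc_castSucc,
    Fin.snoc_last, Fin.monotone_snoc_iff, mem_Icc]
  grind

theorem integral_orderedSimplex_succ {l : ℕ} {a b : ℝ} {f : Fin (l + 1) → ℝ → ℝ}
    (hf : ∀ m, Integrable (f m)) :
    ∫ τ in orderedSimplex (l + 1) a b, ∏ m, f m (τ m) =
      ∫ s in Icc a b, f (Fin.last l) s *
        ∫ τ in orderedSimplex l a s, ∏ m : Fin l, f m.castSucc (τ m) := by
  have he := (volume_preserving_piFinSuccAbove (fun _ : Fin (l + 1) => ℝ) (Fin.last l)).symm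
  have hsnoc : ∀ p : ℝ × (Fin l → ℝ),
      (MeasurableEquiv.piFinSuccAbove (fun _ => ℝ) (Fin.last l)).symm p = Fin.snoc p.2 p.1 :=
    fun p => Fin.insertNth_last' _ _
  have hsplit : ∀ s τ, (orderedSimplex (l + 1) a b).indicator (fun τ => ∏ m, f m (τ m))
      (Fin.snoc τ s) = (Icc a b).indicator (fun s => f (Fin.last l) s *
        (orderedSimplex l a s).indicator (fun τ => ∏ m : Fin l, f m.castSucc (τ m)) τ) s := by
    intro s τ
    by_cases hs : s ∈ Icc a b <;> by_cases hτ : τ ∈ orderedSimplex l a s <;>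
      simp [indicator, snoc_mem_orderedSimplex_iff, hs, hτ, Fin.prod_univ_castSucc, mul_comm]
  have hint : Integrable ((orderedSimplex (l + 1) a b).indicator fun τ => ∏ m, f m (τ m)) :=
    (Integrable.fintype_prod hf).indicator (measurableSet_orderedSimplex ..)
  rw [← integral_indicator (measurableSet_orderedSimplex ..), ← he.integral_comp',
    Measure.volume_eq_prod, integral_prod, ← integral_indicator measurableSet_Icc]
  · refine integral_congr_ae (Filter.Eventually.of_forall fun s => ?_)
    simp only [hsnoc, hsplit]
    by_cases hs : s ∈ Icc a b
    · simp [indicator_of_mem hs, integral_const_mul,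
        integral_indicator (measurableSet_orderedSimplex ..)]
    · simp [indicator_of_notMem hs]
  · rw [← Measure.volume_eq_prod]
    exact (he.integrable_comp_emb (MeasurableEquiv.measurableEmbedding _)).2 hint

theorem integral_orderedSimplex_succ_of_integrableOn {l : ℕ} {a b : ℝ}
    {f : Fin (l + 1) → ℝ → ℝ} (hf : ∀ m, IntegrableOn (f m) (Icc a b)) :
    ∫ τ in orderedSimplex (l + 1) a b, ∏ m, f m (τ m) =
      ∫ s in Icc a b, f (Fin.last l) s *
        ∫ τ in orderedSimplex l a s, ∏ m : Fin l, f m.castSucc (τ m) := by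
  -- Both sides only evaluate `f m` on `Icc a b`, where it agrees with its integrable indicator.
  have hprod : ∀ {k : ℕ} (g : Fin k → ℝ → ℝ) (τ : Fin k → ℝ), (∀ m, τ m ∈ Icc a b) →
      ∏ m, (Icc a b).indicator (g m) (τ m) = ∏ m, g m (τ m) :=
    fun g τ hτ => Finset.prod_congr rfl fun m _ => indicator_of_mem (hτ m) _
  convert integral_orderedSimplex_succ (a := a) (b := b)
    (fun m => (hf m).integrable_indicator measurableSet_Icc) using 1
  · exact setIntegral_congr_fun (measurableSet_orderedSimplex ..)
      fun τ hτ => (hprod _ _ hτ.1).symm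
  · refine setIntegral_congr_fun measurableSet_Icc fun s hs => ?_
    rw [indicator_of_mem hs]
    exact congrArg _ <| setIntegral_congr_fun (measurableSet_orderedSimplex ..)
      fun τ hτ => (hprod _ _ fun m => ⟨(hτ.1 m).1, (hτ.1 m).2.trans hs.2⟩).symm

theorem mul_sum_smul_lmat_apply_castSucc {n : ℕ} (N : Matrix (Fin (n + 1)) (Fin (n + 1)) ℝ)
    (c : Fin n → ℝ) (a : Fin (n + 1)) (j : Fin n) :
    (N * ∑ k, c k • lmat n k) a j.castSucc = c j * N a j.succ := by
  rw [Matrix.mul_sum, Matrix.sum_apply, Finset.sum_eq_single j]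
  · simp [lmat, mul_comm]
  · intro k _ hk
    simp [lmat, (Fin.castSucc_injective n).ne hk.symm]
  · simp

theorem Matrix.IsLowerTriangular.mul_apply_self {m R : Type*} [LinearOrder m] [Fintype m]
    [NonUnitalNonAssocSemiring R] {A B : Matrix m m R} (hA : A.IsLowerTriangular)
    (hB : B.IsLowerTriangular) (i : m) : (A * B) i i = A i i * B i i := by
  refine Finset.sum_eq_single i (fun c _ hc => ?_) (by simp)
  rcases hc.lt_or_gt with hci | hic
  · exact mul_eq_zero_of_right _ (hB hci)
  · exact mul_eq_zero_of_left (hA hic) _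

namespace LowerUni

variable {n : ℕ} {A B : Matrix (Fin n) (Fin n) ℝ}

theorem isLowerTriangular_s17 (hA : LowerUni A) : A.IsLowerTriangular := fun i j h => hA.2 i j h

theorem det_eq_one (hA : LowerUni A) : A.det = 1 := by
  simp [det_of_isLowerTriangular A hA.isLowerTriangular_s17, hA.1]

theorem mul (hA : LowerUni A) (hB : LowerUni B) : LowerUni (A * B) :=
  ⟨fun i => by rw [hA.isLowerTriangular_s17.mul_apply_self hB.isLowerTriangular_s17, hA.1, hB.1, mul_one],
    fun _ _ h => hA.isLowerTriangular_s17.mul hB.isLowerTriangular_s17 h⟩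

theorem inv (hA : LowerUni A) : LowerUni A⁻¹ := by
  have hdet : IsUnit A.det := by rw [hA.det_eq_one]; exact isUnit_one
  have := A.invertibleOfIsUnitDet hdet
  have hinv : A⁻¹.IsLowerTriangular := blockTriangular_inv_of_blockTriangular hA.isLowerTriangular_s17
  refine ⟨fun i => ?_, fun _ _ h => hinv h⟩
  simpa [hinv.mul_apply_self hA.isLowerTriangular_s17, hA.1] using
    congrFun₂ (nonsing_inv_mul A hdet) i i

end LowerUni

theorem hasDerivAt_const_mul_apply {𝕜 ι κ μ : Type*} [NontriviallyNormedField 𝕜] [Fintype ι]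
    (A : Matrix κ ι 𝕜) {Γ : 𝕜 → Matrix ι μ 𝕜} {Γ' : Matrix ι μ 𝕜} {t : 𝕜}
    (hΓ : ∀ a b, HasDerivAt (fun s => Γ s a b) (Γ' a b) t) (a : κ) (b : μ) :
    HasDerivAt (fun s => (A * Γ s) a b) ((A * Γ') a b) t := by
  simp only [Matrix.mul_apply]
  exact HasDerivAt.fun_sum fun c _ => (hΓ c b).const_mul (A a c)

section LogarithmicDerivative

variable {n : ℕ} {t₀ t₁ : ℝ} {β : Fin n → ℝ → ℝ} {M : ℝ → Matrix (Fin (n + 1)) (Fin (n + 1)) ℝ}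

theorem integrableOn_mul_apply (hβ : ∀ j, IntegrableOn (β j) (Icc t₀ t₁))
    (hM : ∀ t ∈ Icc t₀ t₁, ∀ a b,
      HasDerivAt (fun s => M s a b) ((M t * ∑ j, β j t • lmat n j) a b) t)
    (j : Fin n) (a b : Fin (n + 1)) :
    IntegrableOn (fun s => β j s * M s a b) (Icc t₀ t₁) :=
  (hβ j).mul_continuousOn (fun s hs => (hM s hs a b).continuousAt.continuousWithinAt)
    isCompact_Icc

theorem apply_castSucc_eq_intervalIntegral (hβ : ∀ j, IntegrableOn (β j) (Icc t₀ t₁))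
    (hM₀ : M t₀ = 1)
    (hM : ∀ t ∈ Icc t₀ t₁, ∀ a b,
      HasDerivAt (fun s => M s a b) ((M t * ∑ j, β j t • lmat n j) a b) t)
    {t : ℝ} (ht : t ∈ Icc t₀ t₁) (j : Fin n) {a : Fin (n + 1)} (ha : a ≠ j.castSucc) :
    M t a j.castSucc = ∫ s in t₀..t, β j s * M s a j.succ := by
  have hsub : uIcc t₀ t ⊆ Icc t₀ t₁ := by
    rw [uIcc_of_le ht.1]; exact Icc_subset_Icc_right ht.2
  have hderiv : ∀ s ∈ uIcc t₀ t,
      HasDerivAt (fun s => M s a j.castSucc) (β j s * M s a j.succ) s := fun s hs => by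
    simpa only [mul_sum_smul_lmat_apply_castSucc] using hM s (hsub hs) a j.castSucc
  rw [intervalIntegral.integral_eq_sub_of_hasDerivAt hderiv
    ((integrableOn_mul_apply hβ hM j a _).mono_set hsub).intervalIntegrable, hM₀,
    one_apply_ne ha, sub_zero]

theorem subdiagonal_apply_eq_integral_orderedSimplex (hβ : ∀ j, IntegrableOn (β j) (Icc t₀ t₁))
    (hM₀ : M t₀ = 1)
    (hM : ∀ t ∈ Icc t₀ t₁, ∀ a b,
      HasDerivAt (fun s => M s a b) ((M t * ∑ j, β j t • lmat n j) a b) t)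
    (hdiag : ∀ t ∈ Icc t₀ t₁, ∀ a, M t a a = 1)
    (l i : ℕ) (hil : i + l ≤ n) {a : Fin (n + 1)} (ha : (a : ℕ) = i + l)
    {t : ℝ} (ht : t ∈ Icc t₀ t₁) :
    M t a ⟨i, by omega⟩ =
      ∫ τ in orderedSimplex l t₀ t, ∏ m : Fin l, β ⟨i + (l - 1 - m), by omega⟩ (τ m) := by
  induction l generalizing i a t with
  | zero =>
    rw [show (⟨i, _⟩ : Fin (n + 1)) = a from Fin.ext ha.symm]
    simp [hdiag t ht, orderedSimplex_zero, volume_pi, Measure.real]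
  | succ l ih =>
    have hsub : Icc t₀ t ⊆ Icc t₀ t₁ := Icc_subset_Icc_right ht.2
    refine (apply_castSucc_eq_intervalIntegral hβ hM₀ hM ht ⟨i, by omega⟩
      (Fin.ne_of_val_ne (by simp; omega))).trans ?_
    rw [intervalIntegral.integral_of_le ht.1, ← integral_Icc_eq_integral_Ioc,
      integral_orderedSimplex_succ_of_integrableOn fun m => (hβ _).mono_set hsub]
    refine setIntegral_congr_fun measurableSet_Icc fun s hs => ?_
    simp only [Fin.succ_mk]
    rw [ih (i + 1) (by omega) (a := a) (by omega) (hsub hs)]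
    congr! 6 <;> grind

theorem subdiagonal_apply_pos (hβpos : ∀ j, ∀ t ∈ Icc t₀ t₁, 0 < β j t)
    (hβ : ∀ j, IntegrableOn (β j) (Icc t₀ t₁)) (hM₀ : M t₀ = 1)
    (hM : ∀ t ∈ Icc t₀ t₁, ∀ a b,
      HasDerivAt (fun s => M s a b) ((M t * ∑ j, β j t • lmat n j) a b) t)
    (hdiag : ∀ t ∈ Icc t₀ t₁, ∀ a, M t a a = 1)
    (l i : ℕ) (hil : i + l ≤ n) {a : Fin (n + 1)} (ha : (a : ℕ) = i + l)
    {t : ℝ} (ht : t ∈ Icc t₀ t₁) (h : t₀ < t) :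
    0 < M t a ⟨i, by omega⟩ := by
  induction l generalizing i a t with
  | zero =>
    rw [show (⟨i, _⟩ : Fin (n + 1)) = a from Fin.ext ha.symm, hdiag t ht]
    exact one_pos
  | succ l ih =>
    have hsub : Icc t₀ t ⊆ Icc t₀ t₁ := Icc_subset_Icc_right ht.2
    rw [show M t a ⟨i, _⟩ = _ from apply_castSucc_eq_intervalIntegral hβ hM₀ hM ht ⟨i, by omega⟩
      (a := a) (Fin.ne_of_val_ne (by simp; omega))]
    refine intervalIntegral.intervalIntegral_pos_of_pos_on ?_ (fun s hs => ?_) h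
    · exact ((integrableOn_mul_apply hβ hM _ a _).mono_set
        (by rw [uIcc_of_le ht.1]; exact hsub)).intervalIntegrable
    · have hs' : s ∈ Icc t₀ t₁ := hsub (Ioo_subset_Icc_self hs)
      exact mul_pos (hβpos _ s hs') (ih (i + 1) (by omega) (a := a) (by omega) hs' hs.1)

end LogarithmicDerivative

/-- For a convex curve `Γ : [t₀,t₁] → Lo¹_{n+1}` with logarithmic derivative
`Γ⁻¹Γ' = Σ_j β_j l_j` (`β_j` positive and integrable), the entry
`(Γ(t₀)⁻¹ Γ(t))_{i+l, i}` equals the iterated integral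
`∫_{t₀ ≤ τ₁ ≤ ⋯ ≤ τ_l ≤ t} β_{i+l-1}(τ₁)⋯β_i(τ_l)`; in particular it is positive
for `t > t₀`. (Everything is 0-indexed.) -/
theorem convex_curve_entry_eq_iterated_integral (n : ℕ) (t₀ t₁ : ℝ)
    (Γ : ℝ → Matrix (Fin (n + 1)) (Fin (n + 1)) ℝ) (β : Fin n → ℝ → ℝ)
    (hβpos : ∀ j : Fin n, ∀ t ∈ Set.Icc t₀ t₁, 0 < β j t)
    (hβint : ∀ j : Fin n, IntegrableOn (β j) (Set.Icc t₀ t₁))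
    (hΓLo : ∀ t ∈ Set.Icc t₀ t₁, LowerUni (Γ t))
    (hΓ : ∀ t ∈ Set.Icc t₀ t₁, ∀ a b : Fin (n + 1),
      HasDerivAt (fun s => Γ s a b) ((Γ t * ∑ j : Fin n, β j t • lmat n j) a b) t)
    (i l : ℕ) (hil : i + l ≤ n)
    (t : ℝ) (htt : t ∈ Set.Icc t₀ t₁) :
    (((Γ t₀)⁻¹ * Γ t) ⟨i + l, by omega⟩ ⟨i, by omega⟩ =
      ∫ τ in {τ : Fin l → ℝ | (∀ m, τ m ∈ Set.Icc t₀ t) ∧ Monotone τ},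
        ∏ m : Fin l, β ⟨i + (l - 1 - (m : ℕ)), by have := m.isLt; omega⟩ (τ m)) ∧
    (t₀ < t → 0 < ((Γ t₀)⁻¹ * Γ t) ⟨i + l, by omega⟩ ⟨i, by omega⟩) := by
  set M : ℝ → Matrix (Fin (n + 1)) (Fin (n + 1)) ℝ := fun s => (Γ t₀)⁻¹ * Γ s
  have hΓ₀ := hΓLo t₀ ⟨le_rfl, htt.1.trans htt.2⟩
  have hM₀ : M t₀ = 1 := nonsing_inv_mul _ (by rw [hΓ₀.det_eq_one]; exact isUnit_one)
  have hdiag : ∀ s ∈ Icc t₀ t₁, ∀ a, M s a a = 1 := fun s hs => (hΓ₀.inv.mul (hΓLo s hs)).1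
  have hM : ∀ s ∈ Icc t₀ t₁, ∀ a b,
      HasDerivAt (fun r => M r a b) ((M s * ∑ j, β j s • lmat n j) a b) s := fun s hs a b => by
    have := hasDerivAt_const_mul_apply (Γ t₀)⁻¹ (hΓ s hs) a b
    rwa [← Matrix.mul_assoc] at this
  exact ⟨subdiagonal_apply_eq_integral_orderedSimplex hβint hM₀ hM hdiag l i hil rfl htt,
    subdiagonal_apply_pos hβpos hβint hM₀ hM hdiag l i hil rfl htt⟩
end
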